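/- (Unbiasedness of the over-the-air estimator.) Consider the scheme described in the context: a_k ∈ [0,P] for k = 1,…,K, transmit symbols X_k(m) = √(a_k)·U_k(m) with U_k(m) (k ≤ K, m ≤ M) i.i.d. uniform on {−1,+1}, channel outputs Y(m) = Σ_{k=1}^K H_k(m)·X_k(m) + N(m), where the random signs {U_k(m)} are independent of the pair (H, N), each of the 2KM real random variables H_k^r(m), H_k^i(m) has mean zero and variance 1, the noise components have finite second moments, and 𝔼[H_k^j(m)·N^{j'}(m')] exists for all indices. Then 𝔼[Σ_{m=1}^M |Y(m)|²] = 2M·Σ_{k=1}^K a_k + 𝔼[Σ_{m=1}^M |N(m)|²]. Consequently, with a_k = (P/Δ(f))·(f_k(s_k) − φ_min,k) and ḡ(t) := (Δ(f)/(2·M·P))·t + Σ_{k=1}^K φ_min,k, one has 𝔼[ḡ(‖Y‖² − 𝔼‖N‖²)] = Σ_{k=1}^K f_k(s_k). -/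

import Mathlib

/-!
Fix a channel use `m` and a real component `j`, and write `Y = ∑ₖ Hₖ √aₖ Uₖ + N`. The signs are
centred, pairwise uncorrelated and independent of `(H, N)`, so on expanding `Y²` every cross term
factorises through a vanishing sign moment: `𝔼[UₖUₗ HₖHₗ] = 𝔼[UₖUₗ] 𝔼[HₖHₗ] = 0` for `k ≠ l` and
`𝔼[Uₖ HₖN] = 𝔼[Uₖ] 𝔼[HₖN] = 0`, while `Uₖ² = 1` leaves `aₖ 𝔼[Hₖ²] = aₖ`. Summing over the `2M`
real components gives the energy identity, and `ḡ` is the affine map inverting the allocation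
`aₖ = (P/Δ)(fₖ(sₖ) - φ_min,k)`.
-/

open MeasureTheory ProbabilityTheory Matrix Real

/-- Euclidean norm of a finitely-indexed real vector. -/
noncomputable def eucNorm {n : Type*} [Fintype n] (v : n → ℝ) : ℝ :=
  Real.sqrt (∑ i, (v i) ^ 2)

/-- Operator (spectral) norm of a real matrix. -/
noncomputable def opNorm {m n : Type*} [Fintype m] [Fintype n] (A : Matrix m n ℝ) : ℝ :=
  sSup {r : ℝ | ∃ x : n → ℝ, eucNorm x ≤ 1 ∧ r = eucNorm (A.mulVec x)}

/-- Frobenius norm of a real matrix. -/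
noncomputable def frobNorm {m n : Type*} [Fintype m] [Fintype n] (A : Matrix m n ℝ) : ℝ :=
  Real.sqrt (∑ i, ∑ j, (A i j) ^ 2)

/-- The sub-gaussian norm of a real random variable. -/
noncomputable def subgaussNorm {Ω : Type*} [MeasurableSpace Ω] (μ : Measure Ω)
    (X : Ω → ℝ) : ℝ :=
  sInf {t : ℝ | 0 < t ∧
    ∀ l : ℝ, ∫ ω, Real.exp (l * (X ω - ∫ ω', X ω' ∂μ)) ∂μ ≤ Real.exp (l ^ 2 * t ^ 2 / 2)}

noncomputable def phiMin (S : Set ℝ) (g : ℝ → ℝ) : ℝ := sInf (g '' S)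

noncomputable def phiMax (S : Set ℝ) (g : ℝ → ℝ) : ℝ := sSup (g '' S)

/-- Total spread `Δ̄(f)` of the inner part of a nomographic representation. -/
noncomputable def totalSpread {K : ℕ} (S : Fin K → Set ℝ) (fk : Fin K → ℝ → ℝ) : ℝ :=
  ∑ k, (phiMax (S k) (fk k) - phiMin (S k) (fk k))

/-- Max-spread `Δ(f)` of the inner part of a nomographic representation. -/
noncomputable def maxSpread {K : ℕ} (S : Fin K → Set ℝ) (fk : Fin K → ℝ → ℝ) : ℝ :=
  ⨆ k, (phiMax (S k) (fk k) - phiMin (S k) (fk k))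

open scoped ENNReal

section
variable {Ω ι : Type*} [MeasurableSpace Ω] {μ : Measure Ω}

theorem integral_add_sq_of_memLp {f g : Ω → ℝ} (hf : MemLp f 2 μ) (hg : MemLp g 2 μ) :
    ∫ ω, (f ω + g ω) ^ 2 ∂μ = ∫ ω, f ω ^ 2 ∂μ + 2 * ∫ ω, f ω * g ω ∂μ + ∫ ω, g ω ^ 2 ∂μ := by
  have hfg : Integrable (fun ω => f ω * g ω) μ := hf.integrable_mul hg
  have hf_fg : Integrable (fun ω => f ω ^ 2 + 2 * (f ω * g ω)) μ :=
    hf.integrable_sq.add (hfg.const_mul 2)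
  simp_rw [add_sq, mul_assoc]
  rw [integral_add hf_fg hg.integrable_sq, integral_add hf.integrable_sq (hfg.const_mul 2),
    integral_const_mul]

theorem integral_sum_sq_of_memLp [Fintype ι] {f : ι → Ω → ℝ} (hf : ∀ i, MemLp (f i) 2 μ) :
    ∫ ω, (∑ i, f i ω) ^ 2 ∂μ = ∑ i, ∑ j, ∫ ω, f i ω * f j ω ∂μ := by
  have hfg : ∀ i j, Integrable (fun ω => f i ω * f j ω) μ := fun i j =>
    (hf i).integrable_mul (hf j)
  simp_rw [sq, Finset.sum_mul_sum]
  rw [integral_finsetSum _ fun i _ => integrable_finsetSum _ fun j _ => hfg i j]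
  exact Finset.sum_congr rfl fun i _ => integral_finsetSum _ fun j _ => hfg i j

theorem integral_sum_mul_of_memLp [Fintype ι] {f : ι → Ω → ℝ} {g : Ω → ℝ}
    (hf : ∀ i, MemLp (f i) 2 μ) (hg : MemLp g 2 μ) :
    ∫ ω, (∑ i, f i ω) * g ω ∂μ = ∑ i, ∫ ω, f i ω * g ω ∂μ := by
  simp_rw [Finset.sum_mul]
  exact integral_finsetSum _ fun i _ => (hf i).integrable_mul hg

theorem integral_sum_eq_card_mul_add [Fintype ι] {X Z : ι → Ω → ℝ}
    (hX : ∀ i, Integrable (X i) μ) (hZ : ∀ i, Integrable (Z i) μ) {A : ℝ}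
    (h : ∀ i, ∫ ω, X i ω ∂μ = A + ∫ ω, Z i ω ∂μ) :
    ∫ ω, ∑ i, X i ω ∂μ = Fintype.card ι * A + ∫ ω, ∑ i, Z i ω ∂μ := by
  rw [integral_finsetSum _ fun i _ => hX i, integral_finsetSum _ fun i _ => hZ i,
    Finset.sum_congr rfl fun i _ => h i, Finset.sum_add_distrib, Finset.sum_const,
    Finset.card_univ, nsmul_eq_mul]

theorem integral_const_mul_sub_const_add_const [IsProbabilityMeasure μ] {Q : Ω → ℝ}
    (hQ : Integrable Q μ) (α E d : ℝ) :
    ∫ ω, (α * (Q ω - E) + d) ∂μ = α * ((∫ ω, Q ω ∂μ) - E) + d := by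
  have hQE : Integrable (fun ω => α * (Q ω - E)) μ := (hQ.sub (integrable_const E)).const_mul α
  rw [integral_add hQE (integrable_const d), integral_const_mul,
    integral_sub hQ (integrable_const E)]
  simp

theorem ProbabilityTheory.iIndepFun.integral_mul_eq_zero {f : ι → Ω → ℝ} (h : iIndepFun f μ)
    (hf : ∀ i, AEStronglyMeasurable (f i) μ) {i j : ι} (hij : i ≠ j)
    (hi : ∫ ω, f i ω ∂μ = 0) : ∫ ω, f i ω * f j ω ∂μ = 0 := by
  simpa [hi] using (h.indepFun hij).integral_mul_eq_mul_integral (hf i) (hf j)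

theorem integral_eq_zero_of_rademacher [IsProbabilityMeasure μ] {V : Ω → ℝ} (hV : Measurable V)
    (hsign : ∀ ω, V ω = 1 ∨ V ω = -1) (hunif : μ {ω | V ω = 1} = 1 / 2) :
    ∫ ω, V ω ∂μ = 0 := by
  set A := {ω | V ω = 1}
  have hA : MeasurableSet A := hV (measurableSet_singleton 1)
  have hV_eq : V = fun ω => 2 * A.indicator (fun _ => (1 : ℝ)) ω - 1 := by
    funext ω
    rcases hsign ω with h | h <;> simp [A, Set.indicator_apply, h] <;> norm_num
  have hind : Integrable (A.indicator fun _ => (1 : ℝ)) μ := (integrable_const 1).indicator hA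
  rw [hV_eq, integral_sub (hind.const_mul 2) (integrable_const 1), integral_const_mul,
    integral_indicator_const _ hA, integral_const, measureReal_def, hunif]
  norm_num

variable {U G : Ω → ι → ℝ} {N : Ω → ℝ} (c : ι → ℝ)

theorem memLp_two_mul_sign [IsFiniteMeasure μ] (hU : ∀ k, Measurable fun ω => U ω k)
    (hUsign : ∀ ω k, U ω k = 1 ∨ U ω k = -1) (hG : ∀ k, MemLp (fun ω => G ω k) 2 μ) (k : ι) :
    MemLp (fun ω => G ω k * (c k * U ω k)) 2 μ := by
  have hcU : MemLp (fun ω => c k * U ω k) ∞ μ :=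
    .of_bound (((hU k).const_mul (c k)).aestronglyMeasurable) |c k| <| .of_forall fun ω => by
      rcases hUsign ω k with h | h <;> simp [h]
  exact hcU.mul' (hG k)

theorem integral_mul_sign_mul_mul_sign [DecidableEq ι] (hU : ∀ k, Measurable fun ω => U ω k)
    (hUsign : ∀ ω k, U ω k = 1 ∨ U ω k = -1)
    (hUorth : ∀ k l, k ≠ l → ∫ ω, U ω k * U ω l ∂μ = 0)
    (hind : IndepFun U (fun ω => (G ω, N ω)) μ) (hG : ∀ k, MemLp (fun ω => G ω k) 2 μ)
    (k l : ι) :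
    ∫ ω, G ω k * (c k * U ω k) * (G ω l * (c l * U ω l)) ∂μ
      = if k = l then c k ^ 2 * ∫ ω, G ω k ^ 2 ∂μ else 0 := by
  by_cases hkl : k = l
  · subst hkl
    have hUU : ∀ ω, U ω k * U ω k = 1 := fun ω => by rcases hUsign ω k with h | h <;> simp [h]
    rw [if_pos rfl, ← integral_const_mul]
    congr 1 with ω
    linear_combination (G ω k * c k) ^ 2 * hUU ω
  · have hprod : IndepFun (fun ω => U ω k * U ω l) (fun ω => G ω k * G ω l) μ :=
      hind.comp (φ := fun u : ι → ℝ => u k * u l) (ψ := fun p : (ι → ℝ) × ℝ => p.1 k * p.1 l)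
        (by fun_prop) (by fun_prop)
    have h := hprod.integral_mul_eq_mul_integral ((hU k).mul (hU l)).aestronglyMeasurable
      ((hG k).aestronglyMeasurable.mul (hG l).aestronglyMeasurable)
    simp only [Pi.mul_apply, hUorth k l hkl, zero_mul] at h
    rw [if_neg hkl, ← mul_zero (c k * c l), ← h, ← integral_const_mul]
    congr 1 with ω
    ring

theorem integral_mul_sign_mul_eq_zero (hU : ∀ k, Measurable fun ω => U ω k)
    (hUmean : ∀ k, ∫ ω, U ω k ∂μ = 0)
    (hind : IndepFun U (fun ω => (G ω, N ω)) μ) (hG : ∀ k, MemLp (fun ω => G ω k) 2 μ)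
    (hN : MemLp N 2 μ) (k : ι) :
    ∫ ω, G ω k * (c k * U ω k) * N ω ∂μ = 0 := by
  have hprod : IndepFun (fun ω => U ω k) (fun ω => G ω k * N ω) μ :=
    hind.comp (φ := fun u : ι → ℝ => u k) (ψ := fun p : (ι → ℝ) × ℝ => p.1 k * p.2)
      (by fun_prop) (by fun_prop)
  have h := hprod.integral_mul_eq_mul_integral (hU k).aestronglyMeasurable
    ((hG k).aestronglyMeasurable.mul hN.aestronglyMeasurable)
  simp only [Pi.mul_apply, hUmean k, zero_mul] at h
  rw [← mul_zero (c k), ← h, ← integral_const_mul]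
  congr 1 with ω
  ring

variable [Fintype ι]

theorem memLp_two_sum_mul_sign_add [IsFiniteMeasure μ] (hU : ∀ k, Measurable fun ω => U ω k)
    (hUsign : ∀ ω k, U ω k = 1 ∨ U ω k = -1) (hG : ∀ k, MemLp (fun ω => G ω k) 2 μ)
    (hN : MemLp N 2 μ) :
    MemLp (fun ω => ∑ k, G ω k * (c k * U ω k) + N ω) 2 μ :=
  (memLp_finsetSum _ fun k _ => memLp_two_mul_sign c hU hUsign hG k).add hN

theorem integral_sq_sum_mul_sign_add [IsFiniteMeasure μ] (hU : ∀ k, Measurable fun ω => U ω k)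
    (hUsign : ∀ ω k, U ω k = 1 ∨ U ω k = -1) (hUmean : ∀ k, ∫ ω, U ω k ∂μ = 0)
    (hUorth : ∀ k l, k ≠ l → ∫ ω, U ω k * U ω l ∂μ = 0)
    (hind : IndepFun U (fun ω => (G ω, N ω)) μ) (hG : ∀ k, MemLp (fun ω => G ω k) 2 μ)
    (hN : MemLp N 2 μ) :
    ∫ ω, (∑ k, G ω k * (c k * U ω k) + N ω) ^ 2 ∂μ
      = ∑ k, c k ^ 2 * ∫ ω, G ω k ^ 2 ∂μ + ∫ ω, N ω ^ 2 ∂μ := by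
  classical
  have hX := memLp_two_mul_sign c hU hUsign hG
  rw [integral_add_sq_of_memLp (memLp_finsetSum _ fun k _ => hX k) hN,
    integral_sum_sq_of_memLp hX, integral_sum_mul_of_memLp hX hN]
  simp [integral_mul_sign_mul_mul_sign c hU hUsign hUorth hind hG,
    integral_mul_sign_mul_eq_zero c hU hUmean hind hG hN]

end

theorem div_mul_sum_add_sum_of_eq_div_mul_sub {ι : Type*} [Fintype ι] {Δ P : ℝ} (hΔ : Δ ≠ 0)
    (hP : P ≠ 0) {a f φ : ι → ℝ} (ha : ∀ k, a k = P / Δ * (f k - φ k)) :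
    Δ / P * ∑ k, a k + ∑ k, φ k = ∑ k, f k := by
  simp only [ha, ← Finset.mul_sum, ← mul_assoc, div_mul_div_cancel₀ hP]
  field_simp
  rw [Finset.sum_sub_distrib]
  ring

theorem ota_estimator_unbiased_general
    {Ω : Type} [MeasurableSpace Ω] (μ : Measure Ω) [IsProbabilityMeasure μ]
    (K M : ℕ) (hM : 0 < M) (P : ℝ) (hP : 0 < P)
    -- fading and noise
    (H : Ω → Fin M → Fin 2 → Fin K → ℝ) (Noise : Ω → Fin M → Fin 2 → ℝ)
    (hHmeas : ∀ m j k, Measurable fun ω => H ω m j k)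
    (hNmeas : ∀ m j, Measurable fun ω => Noise ω m j)
    (hHvar : ∀ m j k, ∫ ω, (H ω m j k) ^ 2 ∂μ = 1)
    (hHsq : ∀ m j k, Integrable (fun ω => (H ω m j k) ^ 2) μ)
    (hNsq : ∀ m j, Integrable (fun ω => (Noise ω m j) ^ 2) μ)
    -- i.i.d. Rademacher signs, independent of the pair (H, N)
    (U : Ω → Fin K → Fin M → ℝ)
    (hUmeas : ∀ k m, Measurable fun ω => U ω k m)
    (hUsign : ∀ ω k m, U ω k m = 1 ∨ U ω k m = -1)
    (hUunif : ∀ k m, μ {ω | U ω k m = 1} = 1 / 2)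
    (hUindep : iIndepFun
      (fun (p : Fin K × Fin M) ω => U ω p.1 p.2) μ)
    (hUHN : IndepFun U (fun ω => (H ω, Noise ω)) μ)
    -- transmit powers and channel outputs
    (a : Fin K → ℝ) (ha : ∀ k, a k ∈ Set.Icc 0 P)
    (Y : Ω → Fin M → Fin 2 → ℝ)
    (hY : ∀ ω m j, Y ω m j =
      (∑ k, H ω m j k * (Real.sqrt (a k) * U ω k m)) + Noise ω m j) :
    -- expected received energy
    (∫ ω, ∑ m, ∑ j, (Y ω m j) ^ 2 ∂μ
      = 2 * M * (∑ k, a k) + ∫ ω, ∑ m, ∑ j, (Noise ω m j) ^ 2 ∂μ)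
    -- consequently, `𝔼[ḡ(‖Y‖² − 𝔼‖N‖²)] = Σ_k f_k(s_k)`
    ∧ ∀ (S : Fin K → Set ℝ) (fk : Fin K → ℝ → ℝ) (s : Fin K → ℝ),
        (∀ k, s k ∈ S k) →
        (∀ k, BddAbove (fk k '' S k)) → (∀ k, BddBelow (fk k '' S k)) →
        0 < maxSpread S fk →
        (∀ k, a k = P / maxSpread S fk * (fk k (s k) - phiMin (S k) (fk k))) →
        ∫ ω, (maxSpread S fk / (2 * M * P) * ((∑ m, ∑ j, (Y ω m j) ^ 2)
              - ∫ ω', ∑ m, ∑ j, (Noise ω' m j) ^ 2 ∂μ)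
            + ∑ k, phiMin (S k) (fk k)) ∂μ
          = ∑ k, fk k (s k) := by
  have hUmean : ∀ k m, ∫ ω, U ω k m ∂μ = 0 := fun k m =>
    integral_eq_zero_of_rademacher (hUmeas k m) (fun ω => hUsign ω k m) (hUunif k m)
  have hUorth : ∀ m k l, k ≠ l → ∫ ω, U ω k m * U ω l m ∂μ = 0 := fun m k l hkl =>
    hUindep.integral_mul_eq_zero (i := (k, m)) (j := (l, m))
      (fun p => (hUmeas p.1 p.2).aestronglyMeasurable) (by simp [hkl]) (hUmean k m)
  have hchannel : ∀ m j, MemLp (fun ω => Y ω m j) 2 μ ∧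
      ∫ ω, Y ω m j ^ 2 ∂μ = ∑ k, a k + ∫ ω, Noise ω m j ^ 2 ∂μ := by
    intro m j
    have hG : ∀ k, MemLp (fun ω => H ω m j k) 2 μ := fun k =>
      (memLp_two_iff_integrable_sq (hHmeas m j k).aestronglyMeasurable).2 (hHsq m j k)
    have hN : MemLp (fun ω => Noise ω m j) 2 μ :=
      (memLp_two_iff_integrable_sq (hNmeas m j).aestronglyMeasurable).2 (hNsq m j)
    have hind : IndepFun (fun ω k => U ω k m) (fun ω => (fun k => H ω m j k, Noise ω m j)) μ :=
      hUHN.comp (φ := fun (u : Fin K → Fin M → ℝ) k => u k m)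
        (ψ := fun p : (Fin M → Fin 2 → Fin K → ℝ) × (Fin M → Fin 2 → ℝ) =>
          (fun k => p.1 m j k, p.2 m j)) (by fun_prop) (by fun_prop)
    simp_rw [hY]
    refine ⟨memLp_two_sum_mul_sign_add _ (fun k => hUmeas k m) (fun ω k => hUsign ω k m) hG hN, ?_⟩
    rw [integral_sq_sum_mul_sign_add (fun k => √(a k)) (fun k => hUmeas k m)
      (fun ω k => hUsign ω k m) (fun k => hUmean k m) (hUorth m) hind hG hN]
    simp [hHvar, Real.sq_sqrt (ha _).1]
  have hYsq : ∀ m, Integrable (fun ω => ∑ j, Y ω m j ^ 2) μ := fun m =>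
    integrable_finsetSum _ fun j _ => (hchannel m j).1.integrable_sq
  have henergy : ∫ ω, ∑ m, ∑ j, Y ω m j ^ 2 ∂μ
      = 2 * M * ∑ k, a k + ∫ ω, ∑ m, ∑ j, Noise ω m j ^ 2 ∂μ := by
    rw [integral_sum_eq_card_mul_add hYsq (fun m => integrable_finsetSum _ fun j _ => hNsq m j)
      fun m => integral_sum_eq_card_mul_add (fun j => (hchannel m j).1.integrable_sq)
        (hNsq m) fun j => (hchannel m j).2]
    simp only [Fintype.card_fin, Nat.cast_ofNat]
    ring
  refine ⟨henergy, fun S fk s _ _ _ hΔ hpow => ?_⟩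
  rw [integral_const_mul_sub_const_add_const (integrable_finsetSum _ fun m _ => hYsq m), henergy,
    add_sub_cancel_right, ← div_mul_sum_add_sum_of_eq_div_mul_sub hΔ.ne' hP.ne' hpow]
  field_simp

/-- **Unbiasedness of the over-the-air estimator**: the expected received energy equals
`2M·Σ_k a_k` plus the expected noise energy, and consequently the post-processed
statistic `ḡ(‖Y‖² − 𝔼‖N‖²)` is an unbiased estimate of `Σ_k f_k(s_k)`.  Here `H ω m j k`
is the real (`j = 0`) resp. imaginary (`j = 1`) part of the fading coefficient of user
`k` at channel use `m`, and `Noise ω m j` the corresponding part of the additive noise. -/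
theorem ota_estimator_unbiased
    {Ω : Type} [MeasurableSpace Ω] (μ : Measure Ω) [IsProbabilityMeasure μ]
    (K M : ℕ) (hM : 0 < M) (P : ℝ) (hP : 0 < P)
    -- fading and noise
    (H : Ω → Fin M → Fin 2 → Fin K → ℝ) (Noise : Ω → Fin M → Fin 2 → ℝ)
    (hHmeas : ∀ m j k, Measurable fun ω => H ω m j k)
    (hNmeas : ∀ m j, Measurable fun ω => Noise ω m j)
    (hHmean : ∀ m j k, ∫ ω, H ω m j k ∂μ = 0)
    (hHvar : ∀ m j k, ∫ ω, (H ω m j k) ^ 2 ∂μ = 1)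
    (hHsq : ∀ m j k, Integrable (fun ω => (H ω m j k) ^ 2) μ)
    (hNsq : ∀ m j, Integrable (fun ω => (Noise ω m j) ^ 2) μ)
    (hHN : ∀ m j k m' j', Integrable (fun ω => H ω m j k * Noise ω m' j') μ)
    -- i.i.d. Rademacher signs, independent of the pair (H, N)
    (U : Ω → Fin K → Fin M → ℝ)
    (hUmeas : ∀ k m, Measurable fun ω => U ω k m)
    (hUsign : ∀ ω k m, U ω k m = 1 ∨ U ω k m = -1)
    (hUunif : ∀ k m, μ {ω | U ω k m = 1} = 1 / 2)
    (hUindep : iIndepFun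
      (fun (p : Fin K × Fin M) ω => U ω p.1 p.2) μ)
    (hUHN : IndepFun U (fun ω => (H ω, Noise ω)) μ)
    -- transmit powers and channel outputs
    (a : Fin K → ℝ) (ha : ∀ k, a k ∈ Set.Icc 0 P)
    (Y : Ω → Fin M → Fin 2 → ℝ)
    (hY : ∀ ω m j, Y ω m j =
      (∑ k, H ω m j k * (Real.sqrt (a k) * U ω k m)) + Noise ω m j) :
    -- expected received energy
    (∫ ω, ∑ m, ∑ j, (Y ω m j) ^ 2 ∂μ
      = 2 * M * (∑ k, a k) + ∫ ω, ∑ m, ∑ j, (Noise ω m j) ^ 2 ∂μ)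
    -- consequently, `𝔼[ḡ(‖Y‖² − 𝔼‖N‖²)] = Σ_k f_k(s_k)`
    ∧ ∀ (S : Fin K → Set ℝ) (fk : Fin K → ℝ → ℝ) (s : Fin K → ℝ),
        (∀ k, s k ∈ S k) →
        (∀ k, BddAbove (fk k '' S k)) → (∀ k, BddBelow (fk k '' S k)) →
        0 < maxSpread S fk →
        (∀ k, a k = P / maxSpread S fk * (fk k (s k) - phiMin (S k) (fk k))) →
        ∫ ω, (maxSpread S fk / (2 * M * P) * ((∑ m, ∑ j, (Y ω m j) ^ 2)
              - ∫ ω', ∑ m, ∑ j, (Noise ω' m j) ^ 2 ∂μ)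
            + ∑ k, phiMin (S k) (fk k)) ∂μ
          = ∑ k, fk k (s k) :=
  ota_estimator_unbiased_general μ K M hM P hP H Noise hHmeas hNmeas hHvar hHsq hNsq U hUmeas hUsign
    hUunif hUindep hUHN a ha Y hY
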